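/- arXiv:2508.21620 — 3 statements merged into one kernel-verified Lean document; each statement's English description precedes it below -/
import Mathlib

section
/- Core lemma of the UCB analysis: let 𝒜 be a nonempty finite set, let μ̂, μ : 𝒜 → ℝ and ε : 𝒜 → ℝ with ε(a) ≥ 0 and |μ̂(a) − μ(a)| ≤ ε(a) for all a ∈ 𝒜. If a_t maximizes the function a ↦ μ̂(a) + ε(a) over 𝒜 and a* maximizes μ over 𝒜, then μ(a*) − μ(a_t) ≤ 2 ε(a_t). -/
theorem ucb_core_general
    {A : Type*}
    (μhat μ : A → ℝ) (ε : A → ℝ)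
    (hclose : ∀ a, |μhat a - μ a| ≤ ε a)
    (at_ astar : A)
    (hat : ∀ a, μhat a + ε a ≤ μhat at_ + ε at_) :
    μ astar - μ at_ ≤ 2 * ε at_ := by
  rw [sub_le_iff_le_add']
  calc μ astar ≤ μhat astar + ε astar := by linarith [(abs_sub_le_iff.mp (hclose astar)).2]
    _ ≤ μhat at_ + ε at_ := hat astar
    _ ≤ μ at_ + 2 * ε at_ := by linarith [(abs_sub_le_iff.mp (hclose at_)).1]

/-- Core lemma of the UCB analysis: if every estimate `μ̂ a` is within `ε a` of
the true mean `μ a`, `at_` maximizes the UCB index `a ↦ μ̂ a + ε a`, and `astar`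
maximizes `μ`, then `μ astar − μ at_ ≤ 2 ε at_`. -/
theorem ucb_core
    {A : Type*} [Fintype A] [Nonempty A]
    (μhat μ : A → ℝ) (ε : A → ℝ) (hε : ∀ a, 0 ≤ ε a)
    (hclose : ∀ a, |μhat a - μ a| ≤ ε a)
    (at_ astar : A)
    (hat : ∀ a, μhat a + ε a ≤ μhat at_ + ε at_)
    (hastar : ∀ a, μ a ≤ μ astar) :
    μ astar - μ at_ ≤ 2 * ε at_ :=
  ucb_core_general μhat μ ε hclose at_ astar hat
end

section
/- Sum of predictive variances is controlled by the information gain: let σ_n > 0 and m > 0, and let v_1, ..., v_T be reals with 0 ≤ v_t ≤ m for all t. Then Σ_{t=1}^T v_t ≤ (2m / log(1 + σ_n^{-2} m)) · (1/2) Σ_{t=1}^T log(1 + v_t / σ_n²). -/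
/-! Since `x ↦ log (1 + x / σn²)` is concave and vanishes at `0`, on `[0, m]` it lies above its
chord `x ↦ x · log (1 + m / σn²) / m`; summing this over the `v t` gives the bound. -/

open Real Set

theorem ConcaveOn.mul_map_le_mul_map_of_map_zero_nonneg {s : Set ℝ} {f : ℝ → ℝ}
    (hf : ConcaveOn ℝ s f) (h0s : 0 ∈ s) (hf0 : 0 ≤ f 0) {x y : ℝ} (hys : y ∈ s)
    (hx : 0 ≤ x) (hxy : x ≤ y) : x * f y ≤ y * f x := by
  obtain rfl | hy := (hx.trans hxy).eq_or_lt
  · simp [le_antisymm hxy hx]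
  have hfrac : 0 ≤ 1 - x / y := sub_nonneg.2 ((div_le_one hy).2 hxy)
  have hcomb : x / y * y + (1 - x / y) * 0 = x := by
    rw [mul_zero, add_zero, div_mul_cancel₀ x hy.ne']
  have hchord : x / y * f y + (1 - x / y) * f 0 ≤ f x := by
    simpa only [smul_eq_mul, hcomb] using
      hf.2 hys h0s (div_nonneg hx hy.le) hfrac (add_sub_cancel _ _)
  calc x * f y = y * (x / y * f y) := by field_simp
    _ ≤ y * f x := by gcongr; nlinarith [mul_nonneg hfrac hf0]

theorem concaveOn_log_one_add : ConcaveOn ℝ (Ioi (-1)) fun x => log (1 + x) := by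
  have h := strictConcaveOn_log_Ioi.concaveOn.translate_right 1
  have hs : (fun z : ℝ => 1 + z) ⁻¹' Ioi 0 = Ioi (-1) := by
    ext z; simp [neg_lt_iff_pos_add']
  rwa [hs] at h

theorem mul_log_one_add_div_le {c x y : ℝ} (hc : 0 < c) (hx : 0 ≤ x) (hxy : x ≤ y) :
    x * log (1 + y / c) ≤ y * log (1 + x / c) := by
  have hmem : ∀ {z : ℝ}, 0 ≤ z → z ∈ Ioi (-1 : ℝ) := fun hz => by
    simp only [mem_Ioi]; linarith
  have h := concaveOn_log_one_add.mul_map_le_mul_map_of_map_zero_nonneg (hmem le_rfl)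
    (by simp) (hmem (div_nonneg (hx.trans hxy) hc.le)) (div_nonneg hx hc.le)
    (div_le_div_of_nonneg_right hxy hc.le)
  calc x * log (1 + y / c) = c * (x / c * log (1 + y / c)) := by field_simp
    _ ≤ c * (y / c * log (1 + x / c)) := by gcongr
    _ = y * log (1 + x / c) := by field_simp

theorem sum_mul_log_one_add_div_le {ι : Type*} (s : Finset ι) {c m : ℝ} (hc : 0 < c)
    {v : ι → ℝ} (hv : ∀ i, 0 ≤ v i ∧ v i ≤ m) :
    (∑ i ∈ s, v i) * log (1 + m / c) ≤ m * ∑ i ∈ s, log (1 + v i / c) := by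
  rw [Finset.sum_mul, Finset.mul_sum]
  exact Finset.sum_le_sum fun i _ => mul_log_one_add_div_le hc (hv i).1 (hv i).2

/-- Sum of predictive variances is controlled by the information gain: for noise
level `σn > 0`, bound `m > 0`, and variances `0 ≤ v t ≤ m`,
`∑ t, v t ≤ (2 m / log (1 + σn⁻² m)) · (1/2) ∑ t, log (1 + v t / σn²)`. -/
theorem sum_variances_le_info_gain
    (σn m : ℝ) (hσn : 0 < σn) (hm : 0 < m)
    (T : ℕ) (v : Fin T → ℝ) (hv : ∀ t, 0 ≤ v t ∧ v t ≤ m) :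
    ∑ t, v t ≤
      2 * m / Real.log (1 + σn ^ (-2 : ℤ) * m) *
        (1 / 2 * ∑ t, Real.log (1 + v t / σn ^ 2)) := by
  have hc : 0 < σn ^ 2 := by positivity
  have hscale : σn ^ (-2 : ℤ) * m = m / σn ^ 2 := by
    rw [zpow_neg, inv_mul_eq_div, zpow_ofNat]
  have hL : 0 < log (1 + m / σn ^ 2) := log_pos (by linarith [div_pos hm hc])
  rw [hscale, mul_comm (2 * m / _), ← mul_div_assoc, le_div_iff₀ hL]
  calc (∑ t, v t) * log (1 + m / σn ^ 2) ≤ m * ∑ t, log (1 + v t / σn ^ 2) :=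
        sum_mul_log_one_add_div_le _ hc hv
    _ = (1 / 2 * ∑ t, log (1 + v t / σn ^ 2)) * (2 * m) := by ring
end

section
/- Per-step bound in the Thompson-sampling analysis: let t ≥ 1 be an integer, let 𝒳 be a nonempty finite set of cardinality |𝒳|, let 0 < σ ≤ 1, and set β = √(2 log((t² + 1)|𝒳| / √(2π))), assuming (t² + 1)|𝒳| ≥ √(2π). If Z is a real Gaussian random variable with mean −βσ and variance σ², then E[Z · 1{Z ≥ 0}] ≤ 1 / ((t² + 1) |𝒳|). -/
/-! The Gaussian density `φ` of `N(m, v)` satisfies `φ' x = -(x - m) / v * φ x`, so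
`∫_{x ≥ 0} (x - m) φ x dx = v φ 0`. For `m ≤ 0` this dominates the truncated first moment, which
is therefore at most `σ / √(2π) · exp (-m² / (2σ²))` when `v = σ²`. For `m = -βσ` the exponential
is `exp (-β² / 2) = √(2π) / ((t² + 1)|𝒳|)`, and `σ ≤ 1` finishes. -/

open Filter MeasureTheory ProbabilityTheory Real
open scoped NNReal Topology

namespace Real

lemma exp_neg_sqrt_two_mul_log_sq_div_two {r : ℝ} (hr : 1 ≤ r) :
    exp (-√(2 * log r) ^ 2 / 2) = r⁻¹ := by
  rw [sq_sqrt (by have := log_nonneg hr; positivity), neg_div, mul_div_cancel_left₀ _ two_ne_zero,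
    exp_neg, exp_log (by linarith)]

end Real

namespace ProbabilityTheory

variable {E : Type*} [NormedAddCommGroup E] [NormedSpace ℝ E] {m : ℝ} {v : ℝ≥0}

lemma hasDerivAt_gaussianPDFReal (m : ℝ) (v : ℝ≥0) (x : ℝ) :
    HasDerivAt (gaussianPDFReal m v) (-(x - m) / v * gaussianPDFReal m v x) x := by
  have hexponent : HasDerivAt (fun y ↦ -(y - m) ^ 2 / (2 * v)) (-(x - m) / v) x :=
    ((((hasDerivAt_id' x).sub_const m).pow 2).fun_neg.div_const (2 * (v : ℝ))).congr_deriv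
      (by ring)
  exact (hexponent.exp.const_mul (√(2 * π * v))⁻¹).congr_deriv
    (by rw [gaussianPDFReal_def]; ring)

lemma tendsto_gaussianPDFReal_atTop (m : ℝ) (v : ℝ≥0) :
    Tendsto (gaussianPDFReal m v) atTop (𝓝 0) := by
  rcases eq_or_ne v 0 with rfl | hv
  · rw [gaussianPDFReal_zero_var]
    exact tendsto_const_nhds
  have hsq : Tendsto (fun x : ℝ ↦ (x - m) ^ 2 / (2 * v)) atTop atTop :=
    ((tendsto_pow_atTop two_ne_zero).comp (tendsto_atTop_add_const_right _ (-m) tendsto_id))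
      |>.atTop_div_const (by positivity)
  simpa [gaussianPDFReal_def, neg_div] using
    (tendsto_exp_atBot.comp (tendsto_neg_atTop_atBot.comp hsq)).const_mul (√(2 * π * v))⁻¹

lemma integrable_gaussianReal_iff (hv : v ≠ 0) {f : ℝ → E} :
    Integrable f (gaussianReal m v) ↔ Integrable (fun x ↦ gaussianPDFReal m v x • f x) := by
  rw [gaussianReal_of_var_ne_zero _ hv, integrable_withDensity_iff_integrable_smul'
    (measurable_gaussianPDF m v) (ae_of_all _ fun _ ↦ gaussianPDF_lt_top)]
  simp only [toReal_gaussianPDF]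

lemma setIntegral_gaussianReal_eq_setIntegral_smul (hv : v ≠ 0) {f : ℝ → E} {s : Set ℝ}
    (hs : MeasurableSet s) :
    ∫ x in s, f x ∂gaussianReal m v = ∫ x in s, gaussianPDFReal m v x • f x := by
  rw [gaussianReal_of_var_ne_zero _ hv, setIntegral_withDensity_eq_setIntegral_toReal_smul
    (measurable_gaussianPDF m v) (ae_of_all _ fun _ ↦ gaussianPDF_lt_top) f hs]
  simp only [toReal_gaussianPDF]

lemma integrable_sub_mean_gaussianReal (m : ℝ) (v : ℝ≥0) :
    Integrable (fun x ↦ x - m) (gaussianReal m v) :=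
  ((memLp_id_gaussianReal 1).integrable le_rfl).sub (integrable_const m)

lemma setIntegral_Ici_sub_mean_gaussianReal (hv : v ≠ 0) (a : ℝ) :
    ∫ x in Set.Ici a, (x - m) ∂gaussianReal m v = v * gaussianPDFReal m v a := by
  have hv' : (v : ℝ) ≠ 0 := mod_cast hv
  have hderiv (x : ℝ) :
      HasDerivAt (fun y ↦ -v * gaussianPDFReal m v y) (gaussianPDFReal m v x • (x - m)) x :=
    ((hasDerivAt_gaussianPDFReal m v x).const_mul _).congr_deriv (by field_simp; ring)
  rw [setIntegral_gaussianReal_eq_setIntegral_smul hv measurableSet_Ici,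
    integral_Ici_eq_integral_Ioi, integral_Ioi_of_hasDerivAt_of_tendsto' (fun x _ ↦ hderiv x)
      ((integrable_gaussianReal_iff hv).1 (integrable_sub_mean_gaussianReal m v)).integrableOn
      (by simpa using (tendsto_gaussianPDFReal_atTop m v).const_mul (-(v : ℝ)))]
  ring

lemma setIntegral_Ici_zero_id_gaussianReal_le (hv : v ≠ 0) (hm : m ≤ 0) :
    ∫ x in Set.Ici 0, x ∂gaussianReal m v ≤ v * gaussianPDFReal m v 0 := by
  calc ∫ x in Set.Ici 0, x ∂gaussianReal m v
      ≤ ∫ x in Set.Ici 0, (x - m) ∂gaussianReal m v :=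
        setIntegral_mono_on ((memLp_id_gaussianReal 1).integrable le_rfl).integrableOn
          (integrable_sub_mean_gaussianReal m v).integrableOn measurableSet_Ici
          fun x _ ↦ by linarith
    _ = v * gaussianPDFReal m v 0 := setIntegral_Ici_sub_mean_gaussianReal hv 0

lemma setIntegral_Ici_zero_id_gaussianReal_le_exp {σ : ℝ} (hσ : 0 < σ) (hm : m ≤ 0) :
    ∫ x in Set.Ici 0, x ∂gaussianReal m ⟨σ ^ 2, sq_nonneg σ⟩ ≤
      σ / √(2 * π) * exp (-m ^ 2 / (2 * σ ^ 2)) := by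
  set v : ℝ≥0 := ⟨σ ^ 2, sq_nonneg σ⟩
  have hv_coe : (v : ℝ) = σ ^ 2 := rfl
  have hv : v ≠ 0 := by
    rw [← NNReal.coe_ne_zero, hv_coe]
    positivity
  refine (setIntegral_Ici_zero_id_gaussianReal_le hv hm).trans_eq ?_
  have hsqrt : √(2 * π * σ ^ 2) = √(2 * π) * σ := by
    rw [sqrt_mul (by positivity), sqrt_sq hσ.le]
  rw [gaussianPDFReal, hv_coe, hsqrt, zero_sub, neg_sq]
  field_simp

end ProbabilityTheory

theorem thompson_per_step_bound_general
    {X : Type*} [Fintype X]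
    (t : ℕ) (σ : ℝ) (hσ0 : 0 < σ) (hσ1 : σ ≤ 1)
    (hcard : Real.sqrt (2 * π) ≤ ((t : ℝ) ^ 2 + 1) * (Fintype.card X : ℝ))
    (β : ℝ)
    (hβ : β = Real.sqrt (2 * Real.log (((t : ℝ) ^ 2 + 1) * (Fintype.card X : ℝ)
      / Real.sqrt (2 * π)))) :
    ∫ x in Set.Ici (0 : ℝ), x ∂(gaussianReal (-β * σ) ⟨σ ^ 2, sq_nonneg σ⟩) ≤
      1 / (((t : ℝ) ^ 2 + 1) * (Fintype.card X : ℝ)) := by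
  set N : ℝ := ((t : ℝ) ^ 2 + 1) * (Fintype.card X : ℝ)
  have hsqrt_pos : 0 < √(2 * π) := by positivity
  have hβσ : -β * σ ≤ 0 :=
    mul_nonpos_of_nonpos_of_nonneg (neg_nonpos.2 (hβ ▸ sqrt_nonneg _)) hσ0.le
  have hexp : exp (-(-β * σ) ^ 2 / (2 * σ ^ 2)) = √(2 * π) / N := by
    rw [show -(-β * σ) ^ 2 / (2 * σ ^ 2) = -β ^ 2 / 2 by field_simp, hβ,
      exp_neg_sqrt_two_mul_log_sq_div_two ((one_le_div hsqrt_pos).2 hcard), inv_div]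
  calc ∫ x in Set.Ici (0 : ℝ), x ∂(gaussianReal (-β * σ) ⟨σ ^ 2, sq_nonneg σ⟩)
      ≤ σ / √(2 * π) * exp (-(-β * σ) ^ 2 / (2 * σ ^ 2)) :=
        setIntegral_Ici_zero_id_gaussianReal_le_exp hσ0 hβσ
    _ = σ / N := by rw [hexp]; field_simp
    _ ≤ 1 / N := by gcongr

/-- Per-step bound in the Thompson-sampling analysis: for `t ≥ 1`, a finite
nonempty search space `𝒳`, `0 < σ ≤ 1` and
`β = √(2 log ((t² + 1)|𝒳| / √(2π)))` (with `(t² + 1)|𝒳| ≥ √(2π)`), a Gaussian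
`Z` with mean `−βσ` and variance `σ²` satisfies
`E[Z · 1{Z ≥ 0}] ≤ 1 / ((t² + 1)|𝒳|)`. -/
theorem thompson_per_step_bound
    {X : Type*} [Fintype X] [Nonempty X]
    (t : ℕ) (ht : 1 ≤ t) (σ : ℝ) (hσ0 : 0 < σ) (hσ1 : σ ≤ 1)
    (hcard : Real.sqrt (2 * π) ≤ ((t : ℝ) ^ 2 + 1) * (Fintype.card X : ℝ))
    (β : ℝ)
    (hβ : β = Real.sqrt (2 * Real.log (((t : ℝ) ^ 2 + 1) * (Fintype.card X : ℝ)
      / Real.sqrt (2 * π)))) :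
    ∫ x in Set.Ici (0 : ℝ), x ∂(gaussianReal (-β * σ) ⟨σ ^ 2, sq_nonneg σ⟩) ≤
      1 / (((t : ℝ) ^ 2 + 1) * (Fintype.card X : ℝ)) :=
  thompson_per_step_bound_general t σ hσ0 hσ1 hcard β hβ
end
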